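/- Let m > 0 and let a₁, a₂ ∈ (−∞, 4m²), and let A(γ) := (a₁ − γ)·(a₂ − γ)·J(γ) for γ ∈ (−∞, 4m²). Then for every γ < 4m², A is twice differentiable at γ, its second derivative is given by A″(γ) = ∫_{4m²}^∞ 2·ρ(M)·(M − a₁)·(M − a₂)/(M − γ)³ dM, and A″(γ) > 0. -/

import Mathlib

open MeasureTheory Set Real

/-- The spectral density `ρ(M) = (1/(16π²M))·√(1 − 4m²/M)` for `M ≥ 4m²`, and `0` otherwise. -/
noncomputable def rho (m M : ℝ) : ℝ :=
  if 4 * m ^ 2 ≤ M then (1 / (16 * Real.pi ^ 2 * M)) * Real.sqrt (1 - 4 * m ^ 2 / M) else 0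

/-- The Stieltjes transform `J(γ) = ∫_{4m²}^∞ ρ(M)/(M − γ) dM`. -/
noncomputable def Jfun (m γ : ℝ) : ℝ :=
  ∫ M in Set.Ici (4 * m ^ 2), rho m M / (M - γ)

/-!
Write `A = P · J` with `P(γ) = (a₁ - γ)(a₂ - γ)`. Since `ρ(M) = O(1/M)`, every
`S_k(γ) = ∫ ρ(M)/(M - γ)^k`, `k ≥ 1`, converges for `γ < 4m²`, and differentiation under the
integral sign (dominated on a ball around `γ`) gives `S_k' = k S_{k+1}`. As `J = S_1`, Leibniz'
rule gives `A'' = 2 S_1 + 2 P' S_2 + 2 P S_3`, which is a single integral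
because `(M - γ)² + P'(γ)(M - γ) + P(γ) = (M - a₁)(M - a₂)`. That integrand is positive for
`M > 4m²` since `ρ > 0` there and `a₁, a₂ < 4m² < M`.
-/

open Filter Topology

theorem hasDerivAt_div_sub_pow (a M x : ℝ) (k : ℕ) (h : M - x ≠ 0) :
    HasDerivAt (fun y ↦ a / (M - y) ^ k) (k * (a / (M - x) ^ (k + 1))) x := by
  have hsub : HasDerivAt (fun y ↦ M - y) (-1) x := by simpa using (hasDerivAt_id x).const_sub M
  have := ((hsub.fun_pow k).fun_inv (pow_ne_zero k h)).const_mul a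
  simp only [← div_eq_mul_inv] at this
  refine this.congr_deriv ?_
  rcases k with _ | k
  · simp
  · rw [Nat.add_sub_cancel]
    field_simp
    ring

theorem norm_div_sub_pow_le {a M x γ : ℝ} (hx : (M - γ) / 2 ≤ M - x) (hγ : 0 < M - γ) (k : ℕ) :
    ‖a / (M - x) ^ k‖ ≤ 2 ^ k * ‖a / (M - γ) ^ k‖ := by
  have hx' : 0 < M - x := by linarith
  rw [Real.norm_eq_abs, Real.norm_eq_abs, abs_div, abs_div, abs_pow, abs_pow, abs_of_pos hx',
    abs_of_pos hγ, mul_div, mul_comm, ← div_div_eq_mul_div, ← div_pow]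
  gcongr

theorem setIntegral_Ici_pos_of_pos {f : ℝ → ℝ} {c : ℝ} (hf : IntegrableOn f (Ici c))
    (hpos : ∀ M ∈ Ioi c, 0 < f M) : 0 < ∫ M in Ici c, f M := by
  rw [integral_Ici_eq_integral_Ioi, setIntegral_pos_iff_support_of_nonneg_ae
      ((ae_restrict_mem measurableSet_Ioi).mono fun M hM ↦ (hpos M hM).le)
      (hf.mono_set Ioi_subset_Ici_self),
    inter_eq_right.2 fun M hM ↦ Function.mem_support.2 (hpos M hM).ne', Real.volume_Ioi]
  exact ENNReal.zero_lt_top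

noncomputable def stieltjesTransform (g : ℝ → ℝ) (c : ℝ) (k : ℕ) (x : ℝ) : ℝ :=
  ∫ M in Ici c, g M / (M - x) ^ k

section StieltjesTransform

variable {g : ℝ → ℝ} {c γ₀ γ : ℝ}

theorem norm_sub_div_sub_pow_le {M : ℝ} (hγ₀ : γ₀ < c) (hγ : γ < c) (hM : c ≤ M) (k : ℕ) :
    ‖(M - γ₀) / (M - γ) ^ (k + 1)‖ ≤ (1 + |γ - γ₀| / (c - γ)) / (c - γ) ^ k := by
  have hd : 0 < c - γ := sub_pos.2 hγ
  have hMγ : c - γ ≤ M - γ := by linarith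
  have hratio : (M - γ₀) / (M - γ) ≤ 1 + |γ - γ₀| / (c - γ) := by
    rw [div_le_iff₀ (hd.trans_le hMγ), add_mul, one_mul]
    have : |γ - γ₀| ≤ |γ - γ₀| / (c - γ) * (M - γ) := by
      rw [div_mul_eq_mul_div, le_div_iff₀ hd]
      exact mul_le_mul_of_nonneg_left hMγ (abs_nonneg _)
    linarith [le_abs_self (γ - γ₀)]
  have hM₀ : 0 ≤ M - γ₀ := by linarith
  rw [Real.norm_of_nonneg (div_nonneg hM₀ (pow_nonneg (hd.le.trans hMγ) _)), pow_succ', ← div_div]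
  exact div_le_div₀ (by positivity) hratio (by positivity) (pow_le_pow_left₀ hd.le hMγ k)

theorem integrableOn_div_sub_pow (hγ₀ : γ₀ < c)
    (hg : IntegrableOn (fun M ↦ g M / (M - γ₀)) (Ici c)) (hγ : γ < c) {k : ℕ} (hk : 1 ≤ k) :
    IntegrableOn (fun M ↦ g M / (M - γ) ^ k) (Ici c) := by
  obtain ⟨k, rfl⟩ := Nat.exists_eq_add_of_le' hk
  have hmeas : Measurable fun M : ℝ ↦ (M - γ₀) / (M - γ) ^ (k + 1) := by fun_prop
  have hbdd : IntegrableOn (fun M ↦ (M - γ₀) / (M - γ) ^ (k + 1) * (g M / (M - γ₀))) (Ici c) :=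
    hg.bdd_mul hmeas.aestronglyMeasurable <|
      (ae_restrict_mem measurableSet_Ici).mono fun M hM ↦ norm_sub_div_sub_pow_le hγ₀ hγ hM k
  refine hbdd.congr_fun (fun M hM ↦ ?_) measurableSet_Ici
  have : M - γ₀ ≠ 0 := by linarith [mem_Ici.1 hM]
  field_simp

theorem half_sub_le_sub_of_mem_ball {M x : ℝ} (hM : c ≤ M)
    (hx : x ∈ Metric.ball γ ((c - γ) / 2)) : (M - γ) / 2 ≤ M - x := by
  rw [Metric.mem_ball, Real.dist_eq, abs_lt] at hx
  linarith [hx.2]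

theorem hasDerivAt_stieltjesTransform (hγ₀ : γ₀ < c)
    (hg : IntegrableOn (fun M ↦ g M / (M - γ₀)) (Ici c)) (hγ : γ < c) {k : ℕ} (hk : 1 ≤ k) :
    HasDerivAt (stieltjesTransform g c k) (k * stieltjesTransform g c (k + 1) γ) γ := by
  have hint {x : ℝ} (hx : x < c) {j : ℕ} (hj : 1 ≤ j) :
      IntegrableOn (fun M ↦ g M / (M - x) ^ j) (Ici c) :=
    integrableOn_div_sub_pow hγ₀ hg hx hj
  have hint' := hint hγ (Nat.le_add_left 1 k)
  have := hasDerivAt_integral_of_dominated_loc_of_deriv_le (μ := volume.restrict (Ici c))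
    (F := fun x M ↦ g M / (M - x) ^ k) (F' := fun x M ↦ k * (g M / (M - x) ^ (k + 1)))
    (bound := fun M ↦ k * (2 ^ (k + 1) * ‖g M / (M - γ) ^ (k + 1)‖))
    (Metric.ball_mem_nhds γ (by linarith : 0 < (c - γ) / 2))
    ((eventually_lt_nhds hγ).mono fun x hx ↦ (hint hx hk).aestronglyMeasurable)
    (hint hγ hk) (hint'.aestronglyMeasurable.const_mul _) ?_
    ((hint'.norm.const_mul _).const_mul _) ?_
  · rw [stieltjesTransform, ← integral_const_mul]
    exact this.2
  all_goals
    filter_upwards [ae_restrict_mem measurableSet_Ici] with M hM x hx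
    have hMx := half_sub_le_sub_of_mem_ball hM hx
    have hMγ : 0 < M - γ := by linarith [mem_Ici.1 hM]
  · rw [norm_mul, Real.norm_natCast]
    exact mul_le_mul_of_nonneg_left (norm_div_sub_pow_le hMx hMγ _) k.cast_nonneg
  · exact hasDerivAt_div_sub_pow _ _ _ _ (by linarith)

variable (a₁ a₂ : ℝ)

theorem hasDerivAt_sub_mul_sub (x : ℝ) :
    HasDerivAt (fun x ↦ (a₁ - x) * (a₂ - x)) (2 * x - a₁ - a₂) x :=
  (((hasDerivAt_id x).const_sub a₁).fun_mul ((hasDerivAt_id x).const_sub a₂)).congr_deriv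
    (by simp only [id]; ring)

theorem hasDerivAt_sub_mul_sub_mul_stieltjesTransform (hγ₀ : γ₀ < c)
    (hg : IntegrableOn (fun M ↦ g M / (M - γ₀)) (Ici c)) (hγ : γ < c) :
    HasDerivAt (fun x ↦ (a₁ - x) * (a₂ - x) * stieltjesTransform g c 1 x)
      ((2 * γ - a₁ - a₂) * stieltjesTransform g c 1 γ +
        (a₁ - γ) * (a₂ - γ) * stieltjesTransform g c 2 γ) γ := by
  have hS := hasDerivAt_stieltjesTransform hγ₀ hg hγ le_rfl
  rw [Nat.cast_one, one_mul] at hS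
  exact (hasDerivAt_sub_mul_sub a₁ a₂ γ).fun_mul hS

theorem hasDerivAt_deriv_sub_mul_sub_mul_stieltjesTransform (hγ₀ : γ₀ < c)
    (hg : IntegrableOn (fun M ↦ g M / (M - γ₀)) (Ici c)) (hγ : γ < c) :
    HasDerivAt (fun x ↦ (2 * x - a₁ - a₂) * stieltjesTransform g c 1 x +
        (a₁ - x) * (a₂ - x) * stieltjesTransform g c 2 x)
      (2 * stieltjesTransform g c 1 γ + 2 * (2 * γ - a₁ - a₂) * stieltjesTransform g c 2 γ +
        2 * (a₁ - γ) * (a₂ - γ) * stieltjesTransform g c 3 γ) γ := by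
  have hL : HasDerivAt (fun x ↦ 2 * x - a₁ - a₂) 2 γ := by
    simpa using (((hasDerivAt_id γ).const_mul 2).sub_const a₁).sub_const a₂
  have hS₁ := hasDerivAt_stieltjesTransform hγ₀ hg hγ le_rfl
  have hS₂ := hasDerivAt_stieltjesTransform hγ₀ hg hγ one_le_two
  refine ((hL.fun_mul hS₁).fun_add ((hasDerivAt_sub_mul_sub a₁ a₂ γ).fun_mul hS₂)).congr_deriv ?_
  push_cast
  ring

theorem mul_sub_mul_sub_div_pow_three {b M : ℝ} (h : M - γ ≠ 0) :
    2 * b * (M - a₁) * (M - a₂) / (M - γ) ^ 3 =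
      2 * (b / (M - γ) ^ 1) + 2 * (2 * γ - a₁ - a₂) * (b / (M - γ) ^ 2) +
        2 * (a₁ - γ) * (a₂ - γ) * (b / (M - γ) ^ 3) := by
  field_simp
  ring

theorem integrableOn_mul_sub_mul_sub_div_pow_three (hγ₀ : γ₀ < c)
    (hg : IntegrableOn (fun M ↦ g M / (M - γ₀)) (Ici c)) (hγ : γ < c) :
    IntegrableOn (fun M ↦ 2 * g M * (M - a₁) * (M - a₂) / (M - γ) ^ 3) (Ici c) := by
  have hint {k : ℕ} (hk : 1 ≤ k) := integrableOn_div_sub_pow hγ₀ hg hγ hk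
  refine IntegrableOn.congr_fun ?_ (fun M hM ↦ (mul_sub_mul_sub_div_pow_three a₁ a₂
    (by linarith [mem_Ici.1 hM])).symm) measurableSet_Ici
  exact (((hint le_rfl).const_mul 2).fun_add ((hint one_le_two).const_mul _)).fun_add
    ((hint (by norm_num : 1 ≤ 3)).const_mul _)

theorem integral_mul_sub_mul_sub_div_pow_three (hγ₀ : γ₀ < c)
    (hg : IntegrableOn (fun M ↦ g M / (M - γ₀)) (Ici c)) (hγ : γ < c) :
    ∫ M in Ici c, 2 * g M * (M - a₁) * (M - a₂) / (M - γ) ^ 3 =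
      2 * stieltjesTransform g c 1 γ + 2 * (2 * γ - a₁ - a₂) * stieltjesTransform g c 2 γ +
        2 * (a₁ - γ) * (a₂ - γ) * stieltjesTransform g c 3 γ := by
  have hint {k : ℕ} (hk : 1 ≤ k) := integrableOn_div_sub_pow hγ₀ hg hγ hk
  rw [setIntegral_congr_fun measurableSet_Ici fun M hM ↦
      mul_sub_mul_sub_div_pow_three a₁ a₂ (by linarith [mem_Ici.1 hM]),
    integral_add (((hint le_rfl).const_mul 2).fun_add ((hint one_le_two).const_mul _))
      ((hint (by norm_num : 1 ≤ 3)).const_mul _),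
    integral_add ((hint le_rfl).const_mul 2) ((hint one_le_two).const_mul _),
    integral_const_mul, integral_const_mul, integral_const_mul]
  rfl

theorem integral_mul_sub_mul_sub_div_pow_three_pos (hγ₀ : γ₀ < c)
    (hg : IntegrableOn (fun M ↦ g M / (M - γ₀)) (Ici c)) (hγ : γ < c)
    (hg_pos : ∀ M ∈ Ioi c, 0 < g M) (ha₁ : a₁ ≤ c) (ha₂ : a₂ ≤ c) :
    0 < ∫ M in Ici c, 2 * g M * (M - a₁) * (M - a₂) / (M - γ) ^ 3 := by
  refine setIntegral_Ici_pos_of_pos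
    (integrableOn_mul_sub_mul_sub_div_pow_three a₁ a₂ hγ₀ hg hγ) fun M hM ↦ ?_
  have := hg_pos M hM
  have : c < M := hM
  have : 0 < M - a₁ := by linarith
  have : 0 < M - a₂ := by linarith
  have : 0 < M - γ := by linarith
  positivity

end StieltjesTransform

theorem rho_nonneg (m M : ℝ) : 0 ≤ rho m M := by
  unfold rho
  split_ifs with h
  · have : 0 ≤ M := (by positivity : 0 ≤ 4 * m ^ 2).trans h
    positivity
  · exact le_rfl

theorem rho_pos {m M : ℝ} (h : 4 * m ^ 2 < M) : 0 < rho m M := by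
  have hM : 0 < M := (by positivity : 0 ≤ 4 * m ^ 2).trans_lt h
  have : 0 < 1 - 4 * m ^ 2 / M := sub_pos.2 ((div_lt_one hM).2 h)
  rw [rho, if_pos h.le]
  positivity

theorem rho_le {m M : ℝ} (hM : 0 < M) : rho m M ≤ 1 / (16 * π ^ 2 * M) := by
  unfold rho
  split_ifs
  · refine mul_le_of_le_one_right (by positivity) (Real.sqrt_le_one.2 ?_)
    linarith [(by positivity : 0 ≤ 4 * m ^ 2 / M)]
  · positivity

theorem measurable_rho (m : ℝ) : Measurable (rho m) :=
  Measurable.ite measurableSet_Ici (by fun_prop) measurable_const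

theorem integrableOn_rho_div_self {m : ℝ} (hm : 0 < m) :
    IntegrableOn (fun M ↦ rho m M / M) (Ici (4 * m ^ 2)) := by
  have hc : 0 < 4 * m ^ 2 := by positivity
  rw [integrableOn_Ici_iff_integrableOn_Ioi]
  refine ((integrableOn_Ioi_rpow_of_lt (by norm_num : (-2 : ℝ) < -1) hc).const_mul
    (1 / (16 * π ^ 2))).mono' ((measurable_rho m).div measurable_id).aestronglyMeasurable ?_
  filter_upwards [ae_restrict_mem measurableSet_Ioi] with M hM
  have hM : 0 < M := hc.trans hM
  rw [Real.norm_of_nonneg (div_nonneg (rho_nonneg m M) hM.le), Real.rpow_neg hM.le,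
    Real.rpow_two]
  calc rho m M / M ≤ 1 / (16 * π ^ 2 * M) / M := div_le_div_of_nonneg_right (rho_le hM) hM.le
    _ = _ := by field_simp

theorem stmt_6 (m : ℝ) (hm : 0 < m) (a₁ a₂ : ℝ)
    (ha₁ : a₁ < 4 * m ^ 2) (ha₂ : a₂ < 4 * m ^ 2)
    (A : ℝ → ℝ) (hA : ∀ γ : ℝ, γ < 4 * m ^ 2 → A γ = (a₁ - γ) * (a₂ - γ) * Jfun m γ) :
    ∀ γ : ℝ, γ < 4 * m ^ 2 →
      DifferentiableAt ℝ A γ ∧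
      HasDerivAt (deriv A)
        (∫ M in Set.Ici (4 * m ^ 2), 2 * rho m M * (M - a₁) * (M - a₂) / (M - γ) ^ 3) γ ∧
      0 < ∫ M in Set.Ici (4 * m ^ 2), 2 * rho m M * (M - a₁) * (M - a₂) / (M - γ) ^ 3 := by
  intro γ hγ
  have hc : (0 : ℝ) < 4 * m ^ 2 := by positivity
  have hρ : IntegrableOn (fun M ↦ rho m M / (M - 0)) (Ici (4 * m ^ 2)) := by
    simpa using integrableOn_rho_div_self hm
  set S := stieltjesTransform (rho m) (4 * m ^ 2)
  have hA_eq {x : ℝ} (hx : x < 4 * m ^ 2) : A =ᶠ[𝓝 x] fun y ↦ (a₁ - y) * (a₂ - y) * S 1 y :=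
    (eventually_lt_nhds hx).mono fun y hy ↦ by simp [hA y hy, Jfun, S, stieltjesTransform]
  have hA' (x : ℝ) (hx : x < 4 * m ^ 2) :=
    (hasDerivAt_sub_mul_sub_mul_stieltjesTransform a₁ a₂ hc hρ hx).congr_of_eventuallyEq (hA_eq hx)
  have hA'_eq : deriv A =ᶠ[𝓝 γ]
      fun x ↦ (2 * x - a₁ - a₂) * S 1 x + (a₁ - x) * (a₂ - x) * S 2 x :=
    (eventually_lt_nhds hγ).mono fun x hx ↦ (hA' x hx).deriv
  refine ⟨(hA' γ hγ).differentiableAt, ?_,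
    integral_mul_sub_mul_sub_div_pow_three_pos a₁ a₂ hc hρ hγ (fun M ↦ rho_pos) ha₁.le ha₂.le⟩
  rw [integral_mul_sub_mul_sub_div_pow_three a₁ a₂ hc hρ hγ]
  exact (hasDerivAt_deriv_sub_mul_sub_mul_stieltjesTransform a₁ a₂ hc hρ hγ).congr_of_eventuallyEq
    hA'_eq
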